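/- arXiv:0906.3652 — 3 statements merged into one kernel-verified Lean document; each statement's English description precedes it below -/
import Mathlib

section
/- A local central limit theorem (De Moivre–Laplace) holds for the total length of dimers: for every B > 0 and every ε > 0 there exists N₀ such that for all integers N ≥ N₀ and all integers h satisfying |h - (1/3)(N-1)| ≤ B·√((2/9)(N-1)), one has | R_N(h) · √((4/9)π(N-1)) · exp( (h - (1/3)(N-1))² / ((4/9)(N-1)) ) - 1 | < ε, where R_N(h) := Σ_{(s,t): t-s=h} P̃_N(s,t). -/
/-!
Summing the dimer weights over the number of dimers is a Vandermonde convolution, so the total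
length of dimers is binomially distributed with parameters `N - 1` and `1/3`. The theorem is then
the local De Moivre–Laplace theorem for `Bin(n, p)`: by Stirling's formula, for `k + m = n`,
`C(n, k) p^k (1-p)^m √(2π n p (1-p))` splits into a ratio of Stirling sequences (tending to 1),
`√(p (1-p) / ((k/n) (m/n)))` (tending to 1), and `exp (-(k log (k/np) + m log (m/(n(1-p)))))`,
whose exponent equals `-(k - np)² / (2 n p (1-p))` up to `O(|k - np|³ / n²)`, which is
`O(1 / √n)` when `|k - np| ≤ B √n`.
-/

open Real Filter Topology Finset Stirling

/-- The hard-dimer probability weights `P̃_N(s,t)`: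
`P̃_N(0,0) = (2/3)^{N-1}`,
`P̃_N(s,t) = (2/3)^{N-1} · C(N-t+s, s) · C(t-s-1, s-1) · 2^{-(t-s)}`
for `1 ≤ s ≤ ⌊t/2⌋` and `1 ≤ t ≤ N`, and `P̃_N(s,t) = 0` otherwise. -/
noncomputable def Ptilde (N s t : ℕ) : ℝ :=
  if s = 0 ∧ t = 0 then (2 / 3 : ℝ) ^ (N - 1)
  else if 1 ≤ s ∧ s ≤ t / 2 ∧ 1 ≤ t ∧ t ≤ N then
    (2 / 3 : ℝ) ^ (N - 1) * ((N - t + s).choose s : ℝ)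
      * ((t - s - 1).choose (s - 1) : ℝ) * (1 / 2 : ℝ) ^ (t - s)
  else 0

theorem sum_range_choose_succ_mul_choose (a b : ℕ) :
    ∑ i ∈ range (b + 1), a.choose (i + 1) * b.choose i = (a + b).choose (b + 1) := by
  rw [Nat.add_choose_eq, Nat.sum_antidiagonal_eq_sum_range_succ_mk,
    sum_range_succ' (fun j => a.choose j * b.choose (b + 1 - j))]
  simp only [Nat.sub_zero, Nat.choose_succ_self, mul_zero, add_zero]
  refine sum_congr rfl fun i hi => ?_
  rw [Nat.succ_sub_succ, Nat.choose_symm (Nat.lt_succ_iff.mp (mem_range.mp hi))]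

lemma Ptilde_self (N s : ℕ) : Ptilde N s s = if s = 0 then (2 / 3 : ℝ) ^ (N - 1) else 0 := by
  unfold Ptilde
  split_ifs <;> first | rfl | omega

lemma Ptilde_zero_succ (N b : ℕ) : Ptilde N 0 (b + 1) = 0 := by
  simp [Ptilde]

lemma Ptilde_succ_add_succ (N i b : ℕ) :
    Ptilde N (i + 1) (i + 1 + (b + 1)) =
      (2 / 3 : ℝ) ^ (N - 1) * (1 / 2) ^ (b + 1)
        * ((N - (b + 1)).choose (i + 1) * b.choose i : ℕ) := by
  unfold Ptilde
  rw [if_neg (by omega)]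
  split_ifs
  · rw [show N - (i + 1 + (b + 1)) + (i + 1) = N - (b + 1) by omega,
      show i + 1 + (b + 1) - (i + 1) - 1 = b by omega,
      show i + 1 + (b + 1) - (i + 1) = b + 1 by omega]
    push_cast
    ring
  · rcases Nat.lt_or_ge b i with hbi | hib
    · simp [Nat.choose_eq_zero_of_lt hbi]
    · simp [Nat.choose_eq_zero_of_lt (show N - (b + 1) < i + 1 by omega)]

theorem tsum_Ptilde_eq_choose_mul (N h : ℕ) :
    ∑' s, Ptilde N s (s + h) = (N - 1).choose h * (1 / 3 : ℝ) ^ h * (2 / 3) ^ (N - 1 - h) := by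
  rcases h with _ | b
  · simp [Ptilde_self]
  have hsupp : ∀ s ∉ range (b + 2), Ptilde N s (s + (b + 1)) = 0 := by
    intro s hs
    obtain ⟨i, rfl⟩ : ∃ i, s = i + 1 := ⟨s - 1, by simp at hs; omega⟩
    rw [Ptilde_succ_add_succ, Nat.choose_eq_zero_of_lt (show b < i by simp at hs; omega)]
    simp
  rw [tsum_eq_sum hsupp, sum_range_succ', zero_add, Ptilde_zero_succ, add_zero]
  simp_rw [Ptilde_succ_add_succ, ← mul_sum, ← Nat.cast_sum, sum_range_choose_succ_mul_choose]
  rcases Nat.lt_or_ge (b + 1) N with hbN | hNb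
  · rw [show N - (b + 1) + b = N - 1 by omega,
      show N - 1 = N - 1 - (b + 1) + (b + 1) by omega, pow_add, Nat.add_sub_cancel]
    rw [show (1 / 3 : ℝ) = 2 / 3 * (1 / 2) by norm_num, mul_pow]
    ring
  · simp [show N - (b + 1) = 0 by omega, Nat.choose_eq_zero_of_lt (show N - 1 < b + 1 by omega)]

lemma abs_one_add_mul_log_one_add_sub_le {u : ℝ} (hu : |u| ≤ 1 / 2) :
    |(1 + u) * log (1 + u) - u - u ^ 2 / 2| ≤ 4 * |u| ^ 3 := by
  set R := log (1 + u) - u + u ^ 2 / 2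
  have hR : |R| ≤ 2 * |u| ^ 3 := by
    have h := abs_log_sub_add_sum_range_le (x := -u) (by rw [abs_neg]; linarith) 2
    rw [abs_neg, sub_neg_eq_add] at h
    have hsum : ∑ i ∈ range 2, (-u) ^ (i + 1) / (i + 1 : ℝ) + log (1 + u) = R := by
      simp only [R, sum_range_succ, sum_range_zero]
      ring
    rw [hsum] at h
    calc |R| ≤ |u| ^ 3 / (1 - |u|) := h
      _ ≤ 2 * |u| ^ 3 := by
        rw [div_le_iff₀ (by linarith)]
        nlinarith [pow_nonneg (abs_nonneg u) 3]
  have h1u : |1 + u| ≤ 3 / 2 := by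
    rw [abs_le] at hu ⊢
    constructor <;> linarith
  calc |(1 + u) * log (1 + u) - u - u ^ 2 / 2| = |(1 + u) * R - u ^ 3 / 2| := by
        congr 1; simp only [R]; ring
    _ ≤ |1 + u| * |R| + |u| ^ 3 / 2 := by
        refine (abs_sub _ _).trans_eq ?_
        rw [abs_mul, abs_div, abs_pow]
        norm_num
    _ ≤ 3 / 2 * (2 * |u| ^ 3) + |u| ^ 3 / 2 := by gcongr
    _ ≤ 4 * |u| ^ 3 := by linarith [pow_nonneg (abs_nonneg u) 3]

lemma abs_mul_log_div_sub_le {a b : ℝ} (hb : 0 < b) (hab : |a - b| ≤ b / 2) :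
    |a * log (a / b) - (a - b) - (a - b) ^ 2 / (2 * b)| ≤ 4 * |a - b| ^ 3 / b ^ 2 := by
  have hu : |(a - b) / b| ≤ 1 / 2 := by
    rw [abs_div, abs_of_pos hb, div_le_iff₀ hb]
    linarith
  have hscale : a * log (a / b) - (a - b) - (a - b) ^ 2 / (2 * b)
      = b * ((1 + (a - b) / b) * log (1 + (a - b) / b) - (a - b) / b - ((a - b) / b) ^ 2 / 2) := by
    rw [show 1 + (a - b) / b = a / b by field_simp; ring]
    field_simp
  calc |a * log (a / b) - (a - b) - (a - b) ^ 2 / (2 * b)|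
      ≤ b * (4 * |(a - b) / b| ^ 3) := by
        rw [hscale, abs_mul, abs_of_pos hb]
        gcongr
        exact abs_one_add_mul_log_one_add_sub_le hu
    _ = 4 * |a - b| ^ 3 / b ^ 2 := by
        rw [abs_div, abs_of_pos hb]
        field_simp

lemma abs_mul_log_add_mul_log_sub_sq_le {x p a : ℝ} (hx : 0 < x) (hp₀ : 0 < p) (hp₁ : p < 1)
    (hap : |a - x * p| ≤ x * p / 2) (haq : |a - x * p| ≤ x * (1 - p) / 2) :
    |a * log (a / (x * p)) + (x - a) * log ((x - a) / (x * (1 - p)))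
        - (a - x * p) ^ 2 / (2 * x * p * (1 - p))|
      ≤ 4 * (1 / p ^ 2 + 1 / (1 - p) ^ 2) * (|a - x * p| ^ 3 / x ^ 2) := by
  have hq₀ : 0 < 1 - p := by linarith
  have hsub : x - a - x * (1 - p) = -(a - x * p) := by ring
  have h₁ := abs_mul_log_div_sub_le (mul_pos hx hp₀) hap
  have h₂ := abs_mul_log_div_sub_le (a := x - a) (mul_pos hx hq₀) (by rwa [hsub, abs_neg])
  rw [hsub, abs_neg] at h₂
  calc _ = |(a * log (a / (x * p)) - (a - x * p) - (a - x * p) ^ 2 / (2 * (x * p)))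
          + ((x - a) * log ((x - a) / (x * (1 - p))) - -(a - x * p)
            - (-(a - x * p)) ^ 2 / (2 * (x * (1 - p))))| := by
        congr 1
        field_simp
        ring
    _ ≤ 4 * |a - x * p| ^ 3 / (x * p) ^ 2 + 4 * |a - x * p| ^ 3 / (x * (1 - p)) ^ 2 :=
        (abs_add_le _ _).trans (add_le_add h₁ h₂)
    _ = _ := by
        field_simp

lemma factorial_eq_stirlingSeq_mul (n : ℕ) (hn : n ≠ 0) :
    (n.factorial : ℝ) = stirlingSeq n * (√(2 * n) * (n / exp 1) ^ n) := by
  have : (0 : ℝ) < n := by positivity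
  rw [stirlingSeq]
  field_simp

lemma choose_mul_pow_mul_pow_eq {p : ℝ} (hp₀ : 0 < p) (hp₁ : p < 1) {k m : ℕ} (hk : k ≠ 0)
    (hm : m ≠ 0) (E : ℝ) :
    ((k + m).choose k : ℝ) * p ^ k * (1 - p) ^ m * √(2 * π * (k + m) * p * (1 - p)) * exp E
      = stirlingSeq (k + m) * √π / (stirlingSeq k * stirlingSeq m)
        * √(p * (1 - p) / (k / (k + m) * (m / (k + m))))
        * exp (-(k * log (k / ((k + m) * p)) + m * log (m / ((k + m) * (1 - p))) - E)) := by
  have hq₀ : 0 < 1 - p := by linarith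
  have hkR : (0 : ℝ) < k := by positivity
  have hmR : (0 : ℝ) < m := by positivity
  have hsqrt : √(2 * π * (k + m) * p * (1 - p))
      = √π * √(2 * k) * √(2 * m) / √(2 * ((k + m : ℕ) : ℝ))
        * √(p * (1 - p) / (k / (k + m) * (m / (k + m)))) := by
    rw [← sqrt_mul (by positivity), ← sqrt_mul (by positivity), ← sqrt_div (by positivity),
      ← sqrt_mul (by positivity)]
    congr 1
    push_cast
    field_simp
  have hexp : exp (-(k * log (k / ((k + m) * p)) + m * log (m / ((k + m) * (1 - p))) - E))
      = exp E / ((k / ((k + m) * p)) ^ k * (m / ((k + m) * (1 - p))) ^ m) := by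
    rw [neg_sub, exp_sub, exp_add, exp_nat_mul, exp_nat_mul, exp_log (by positivity),
      exp_log (by positivity)]
  rw [hsqrt, hexp, Nat.cast_choose ℝ (Nat.le_add_right k m), Nat.add_sub_cancel_left,
    factorial_eq_stirlingSeq_mul _ (by omega), factorial_eq_stirlingSeq_mul _ hk,
    factorial_eq_stirlingSeq_mul _ hm]
  have hs : ∀ j : ℕ, j ≠ 0 → 0 < stirlingSeq j := fun j hj =>
    (sqrt_pos.mpr pi_pos).trans_le (sqrt_pi_le_stirlingSeq hj)
  have := hs k hk
  have := hs m hm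
  have := hs (k + m) (by omega)
  push_cast
  simp only [div_pow, mul_pow, pow_add]
  field_simp

/-- Convergence along `deMoivreWindow p B` is convergence as `n → ∞`, uniformly over the `k`
with `|k - n p| ≤ B √n`. -/
def deMoivreWindow (p B : ℝ) : Filter (ℕ × ℕ) :=
  comap Prod.fst atTop ⊓ 𝓟 {nk | |(nk.2 : ℝ) - nk.1 * p| ≤ B * √(nk.1 : ℝ)}

namespace deMoivreWindow

variable {p B : ℝ}

lemma eventually_iff {P : ℕ × ℕ → Prop} :
    (∀ᶠ nk in deMoivreWindow p B, P nk) ↔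
      ∃ n₀ : ℕ, ∀ n ≥ n₀, ∀ k : ℕ,
        |(k : ℝ) - n * p| ≤ B * √(n : ℝ) → P (n, k) := by
  simp only [deMoivreWindow, eventually_inf_principal, eventually_comap, eventually_atTop]
  refine exists_congr fun n₀ => forall₂_congr fun n _ => ⟨fun h k => h (n, k) rfl, ?_⟩
  rintro h ⟨n', k⟩ rfl
  exact h k

lemma tendsto_fst : Tendsto (fun nk : ℕ × ℕ => nk.1) (deMoivreWindow p B) atTop :=
  tendsto_comap.mono_left inf_le_left

lemma tendsto_fst_cast : Tendsto (fun nk : ℕ × ℕ => (nk.1 : ℝ)) (deMoivreWindow p B) atTop :=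
  tendsto_natCast_atTop_atTop.comp tendsto_fst

lemma eventually_fst_pos : ∀ᶠ nk : ℕ × ℕ in deMoivreWindow p B, (0 : ℝ) < nk.1 :=
  tendsto_fst_cast.eventually_gt_atTop 0

lemma eventually_abs_sub_le :
    ∀ᶠ nk : ℕ × ℕ in deMoivreWindow p B,
      |(nk.2 : ℝ) - nk.1 * p| ≤ B * √(nk.1 : ℝ) :=
  mem_inf_of_right (mem_principal_self _)

lemma tendsto_const_div_sqrt_fst (c : ℝ) :
    Tendsto (fun nk : ℕ × ℕ => c / √(nk.1 : ℝ)) (deMoivreWindow p B) (𝓝 0) :=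
  tendsto_const_nhds.div_atTop (tendsto_sqrt_atTop.comp tendsto_fst_cast)

lemma tendsto_snd_div_fst :
    Tendsto (fun nk : ℕ × ℕ => (nk.2 : ℝ) / nk.1) (deMoivreWindow p B) (𝓝 p) := by
  rw [tendsto_iff_norm_sub_tendsto_zero]
  refine squeeze_zero' (Eventually.of_forall fun _ => norm_nonneg _) ?_
    (tendsto_const_div_sqrt_fst B)
  filter_upwards [eventually_fst_pos, eventually_abs_sub_le] with nk hn hdev
  calc ‖(nk.2 : ℝ) / nk.1 - p‖ = |(nk.2 : ℝ) - nk.1 * p| / nk.1 := by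
        rw [Real.norm_eq_abs, ← abs_of_pos hn, ← abs_div, abs_of_pos hn, sub_div,
          mul_div_cancel_left₀ _ hn.ne']
    _ ≤ B * √(nk.1 : ℝ) / nk.1 := by gcongr
    _ = B / √(nk.1 : ℝ) := by rw [mul_div_assoc, sqrt_div_self', mul_one_div]

lemma eventually_abs_sub_le_mul_fst {c : ℝ} (hc : 0 < c) :
    ∀ᶠ nk : ℕ × ℕ in deMoivreWindow p B, |(nk.2 : ℝ) - nk.1 * p| ≤ c * nk.1 := by
  filter_upwards [eventually_fst_pos,
    tendsto_snd_div_fst.eventually (Metric.closedBall_mem_nhds p hc)] with nk hn hball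
  rw [Real.dist_eq] at hball
  calc |(nk.2 : ℝ) - nk.1 * p| = nk.1 * |(nk.2 : ℝ) / nk.1 - p| := by
        rw [← abs_of_pos hn, ← abs_mul, abs_of_pos hn, mul_sub, mul_div_cancel₀ _ hn.ne',
          mul_comm]
    _ ≤ c * nk.1 := by rw [mul_comm]; gcongr

lemma tendsto_abs_sub_pow_three_div_sq :
    Tendsto (fun nk : ℕ × ℕ => |(nk.2 : ℝ) - nk.1 * p| ^ 3 / (nk.1 : ℝ) ^ 2)
      (deMoivreWindow p B) (𝓝 0) := by
  refine squeeze_zero' (Eventually.of_forall fun _ => by positivity) ?_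
    (tendsto_const_div_sqrt_fst (B ^ 3))
  filter_upwards [eventually_fst_pos, eventually_abs_sub_le] with nk hn hdev
  have hs : (0 : ℝ) < √(nk.1 : ℝ) := sqrt_pos.mpr hn
  have hsq : (nk.1 : ℝ) ^ 2 = √(nk.1 : ℝ) ^ 4 := by
    rw [show 4 = 2 * 2 from rfl, pow_mul, sq_sqrt hn.le]
  calc |(nk.2 : ℝ) - nk.1 * p| ^ 3 / (nk.1 : ℝ) ^ 2
      ≤ (B * √(nk.1 : ℝ)) ^ 3 / (nk.1 : ℝ) ^ 2 := by gcongr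
    _ = B ^ 3 / √(nk.1 : ℝ) := by
        rw [hsq]
        field_simp

lemma tendsto_snd (hp₀ : 0 < p) :
    Tendsto (fun nk : ℕ × ℕ => nk.2) (deMoivreWindow p B) atTop := by
  refine tendsto_natCast_atTop_iff.mp
    ((tendsto_fst_cast.atTop_mul_pos hp₀ tendsto_snd_div_fst).congr' ?_)
  filter_upwards [eventually_fst_pos] with nk hn
  exact mul_div_cancel₀ _ hn.ne'

lemma eventually_snd_lt_fst (hp₁ : p < 1) :
    ∀ᶠ nk : ℕ × ℕ in deMoivreWindow p B, nk.2 < nk.1 := by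
  filter_upwards [eventually_fst_pos, tendsto_snd_div_fst.eventually (gt_mem_nhds hp₁)]
    with nk hn hlt
  exact_mod_cast (div_lt_one hn).mp hlt

lemma tendsto_fst_sub_snd_div_fst (hp₁ : p < 1) :
    Tendsto (fun nk : ℕ × ℕ => ((nk.1 - nk.2 : ℕ) : ℝ) / nk.1) (deMoivreWindow p B)
      (𝓝 (1 - p)) := by
  refine (tendsto_const_nhds.sub tendsto_snd_div_fst).congr' ?_
  filter_upwards [eventually_fst_pos, eventually_snd_lt_fst hp₁] with nk hn hlt
  rw [Nat.cast_sub hlt.le, sub_div, div_self hn.ne']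

lemma tendsto_fst_sub_snd (hp₁ : p < 1) :
    Tendsto (fun nk : ℕ × ℕ => nk.1 - nk.2) (deMoivreWindow p B) atTop := by
  refine tendsto_natCast_atTop_iff.mp
    ((tendsto_fst_cast.atTop_mul_pos (sub_pos.mpr hp₁)
      (tendsto_fst_sub_snd_div_fst hp₁)).congr' ?_)
  filter_upwards [eventually_fst_pos] with nk hn
  exact mul_div_cancel₀ _ hn.ne'

lemma tendsto_stirlingSeq_div (hp₀ : 0 < p) (hp₁ : p < 1) :
    Tendsto (fun nk : ℕ × ℕ =>
        stirlingSeq nk.1 * √π / (stirlingSeq nk.2 * stirlingSeq (nk.1 - nk.2)))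
      (deMoivreWindow p B) (𝓝 1) := by
  have h := tendsto_stirlingSeq_sqrt_pi
  have := ((h.comp (tendsto_fst (B := B))).mul_const √π).div
    ((h.comp (tendsto_snd hp₀)).mul (h.comp (tendsto_fst_sub_snd hp₁))) (by positivity)
  rwa [div_self (by positivity)] at this

lemma tendsto_sqrt_div (hp₀ : 0 < p) (hp₁ : p < 1) :
    Tendsto (fun nk : ℕ × ℕ =>
        √(p * (1 - p) / ((nk.2 : ℝ) / nk.1 * (((nk.1 - nk.2 : ℕ) : ℝ) / nk.1))))
      (deMoivreWindow p B) (𝓝 1) := by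
  have hq₀ : 0 < 1 - p := sub_pos.mpr hp₁
  have := ((tendsto_const_nhds (x := p * (1 - p))).div
    ((tendsto_snd_div_fst (B := B)).mul (tendsto_fst_sub_snd_div_fst hp₁)) (by positivity)).sqrt
  rwa [div_self (by positivity), sqrt_one] at this

lemma tendsto_mul_log_add_mul_log_sub_sq_div (hp₀ : 0 < p) (hp₁ : p < 1) :
    Tendsto (fun nk : ℕ × ℕ => nk.2 * log (nk.2 / (nk.1 * p))
        + ((nk.1 - nk.2 : ℕ) : ℝ) * log (((nk.1 - nk.2 : ℕ) : ℝ) / (nk.1 * (1 - p)))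
        - ((nk.2 : ℝ) - nk.1 * p) ^ 2 / (2 * nk.1 * p * (1 - p)))
      (deMoivreWindow p B) (𝓝 0) := by
  have hq₀ : 0 < 1 - p := sub_pos.mpr hp₁
  have hbound := (tendsto_abs_sub_pow_three_div_sq (p := p) (B := B)).const_mul
    (4 * (1 / p ^ 2 + 1 / (1 - p) ^ 2))
  rw [mul_zero] at hbound
  refine squeeze_zero_norm' ?_ hbound
  filter_upwards [eventually_fst_pos, eventually_snd_lt_fst hp₁,
    eventually_abs_sub_le_mul_fst (half_pos hp₀), eventually_abs_sub_le_mul_fst (half_pos hq₀)]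
    with nk hn hlt hdp hdq
  rw [Nat.cast_sub hlt.le]
  exact abs_mul_log_add_mul_log_sub_sq_le hn hp₀ hp₁ (by linarith) (by linarith)

end deMoivreWindow

open deMoivreWindow in
theorem tendsto_choose_mul_pow_mul_pow_deMoivreWindow {p : ℝ} (hp₀ : 0 < p) (hp₁ : p < 1)
    (B : ℝ) :
    Tendsto (fun nk : ℕ × ℕ => (nk.1.choose nk.2 : ℝ) * p ^ nk.2 * (1 - p) ^ (nk.1 - nk.2)
        * √(2 * π * nk.1 * p * (1 - p))
        * exp (((nk.2 : ℝ) - nk.1 * p) ^ 2 / (2 * nk.1 * p * (1 - p))))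
      (deMoivreWindow p B) (𝓝 1) := by
  have hexp := (continuous_exp.tendsto (-0)).comp
    (tendsto_mul_log_add_mul_log_sub_sq_div (B := B) hp₀ hp₁).neg
  rw [neg_zero, exp_zero] at hexp
  have hprod := ((tendsto_stirlingSeq_div hp₀ hp₁).mul (tendsto_sqrt_div hp₀ hp₁)).mul hexp
  rw [one_mul, one_mul] at hprod
  refine hprod.congr' ?_
  filter_upwards [eventually_snd_lt_fst hp₁, (tendsto_snd hp₀).eventually_ne_atTop 0]
    with ⟨n, k⟩ hlt hk
  dsimp only at hlt hk ⊢
  obtain ⟨m, rfl⟩ := Nat.exists_eq_add_of_le hlt.le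
  simp only [Function.comp_apply, Nat.add_sub_cancel_left]
  push_cast
  rw [choose_mul_pow_mul_pow_eq hp₀ hp₁ hk (by omega)]

/-- local CLT (De Moivre–Laplace) for the total length of dimers,
`R_N(h) := Σ_{(s,t): t-s=h} P̃_N(s,t) = Σ_{s≥0} P̃_N(s, s+h)`. -/
theorem clt_total_length :
    ∀ B > (0 : ℝ), ∀ ε > (0 : ℝ), ∃ N₀ : ℕ, ∀ N : ℕ, N₀ ≤ N → ∀ h : ℕ,
      |(h : ℝ) - 1 / 3 * ((N : ℝ) - 1)| ≤ B * Real.sqrt (2 / 9 * ((N : ℝ) - 1)) →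
      |(∑' s : ℕ, Ptilde N s (s + h))
          * Real.sqrt (4 / 9 * Real.pi * ((N : ℝ) - 1))
          * Real.exp (((h : ℝ) - 1 / 3 * ((N : ℝ) - 1)) ^ 2 / (4 / 9 * ((N : ℝ) - 1)))
        - 1| < ε := by
  intro B hB ε hε
  obtain ⟨n₀, hn₀⟩ := deMoivreWindow.eventually_iff.mp <| Metric.tendsto_nhds.mp
    (tendsto_choose_mul_pow_mul_pow_deMoivreWindow (p := 1 / 3) (by norm_num) (by norm_num) B)
    ε hε
  refine ⟨n₀ + 1, fun N hN h hh => ?_⟩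
  obtain ⟨n, rfl⟩ : ∃ n, N = n + 1 := ⟨N - 1, by omega⟩
  push_cast at hh ⊢
  rw [add_sub_cancel_right] at hh ⊢
  have hwindow : |(h : ℝ) - n * (1 / 3)| ≤ B * √(n : ℝ) := by
    rw [mul_comm]
    exact hh.trans (by gcongr; linarith [(n.cast_nonneg : (0 : ℝ) ≤ n)])
  have hclt := hn₀ n (by omega) h hwindow
  rw [Real.dist_eq] at hclt
  rw [tsum_Ptilde_eq_choose_mul, Nat.add_sub_cancel]
  convert hclt using 5 <;> ring_nf
end

section
/- For every integer N ≥ 1, the second factorial moment of the total length of dimers equals (N-1)(N-2)/9 exactly: Σ_{t=1}^{N} Σ_{s=1}^{⌊t/2⌋} (t-s)(t-s-1) · P̃_N(s,t) = (N-1)(N-2)/9. -/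
open Finset

theorem Nat.descFactorial_mul_choose_of_le {n m k : ℕ} (hkm : k ≤ m) :
    m.descFactorial k * n.choose m = n.descFactorial k * (n - k).choose (m - k) := by
  rw [Nat.descFactorial_eq_factorial_mul_choose, Nat.descFactorial_eq_factorial_mul_choose,
    mul_assoc, mul_assoc, mul_comm (m.choose k), Nat.choose_mul hkm]

theorem sum_range_descFactorial_mul_choose_mul_pow {R : Type*} [CommSemiring R]
    (n k : ℕ) (x : R) :
    ∑ m ∈ range (n + 1), (m.descFactorial k : R) * n.choose m * x ^ m
      = n.descFactorial k * x ^ k * (x + 1) ^ (n - k) := by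
  rcases lt_or_ge n k with hnk | hkn
  · rw [Nat.descFactorial_eq_zero_iff_lt.mpr hnk, Nat.cast_zero, zero_mul, zero_mul]
    refine sum_eq_zero fun m hm => ?_
    rw [Nat.descFactorial_eq_zero_iff_lt.mpr (by grind)]
    simp
  obtain ⟨j, rfl⟩ := Nat.exists_eq_add_of_le hkn
  have hlow : ∀ m ∈ range k, (m.descFactorial k : R) * (k + j).choose m * x ^ m = 0 := by
    intro m hm
    rw [Nat.descFactorial_eq_zero_iff_lt.mpr (mem_range.mp hm)]
    simp
  rw [add_assoc, sum_range_add, sum_eq_zero hlow, zero_add, Nat.add_sub_cancel_left, add_pow,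
    mul_sum]
  refine sum_congr rfl fun i _ => ?_
  have h := Nat.descFactorial_mul_choose_of_le (n := k + j) (Nat.le_add_right k i)
  simp only [Nat.add_sub_cancel_left] at h
  rw [one_pow, mul_one, pow_add, ← mul_assoc, ← Nat.cast_mul, h, Nat.cast_mul]
  ring

theorem sum_Icc_choose_mul_choose_sub_one (a b : ℕ) :
    ∑ s ∈ Icc 1 (min (b + 1) a), a.choose s * b.choose (s - 1) = (a + b).choose (b + 1) := by
  rw [Nat.add_choose_eq, Nat.sum_antidiagonal_eq_sum_range_succ_mk]
  refine sum_subset_zero_on_sdiff (fun s hs => ?_) (fun s hs => ?_) (fun s hs => ?_)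
  · simp only [mem_Icc, mem_range] at hs ⊢
    omega
  · simp only [mem_sdiff, mem_Icc, mem_range] at hs
    rcases Nat.eq_zero_or_pos s with rfl | hs0
    · simp
    · rw [Nat.choose_eq_zero_of_lt (show a < s by omega), zero_mul]
  · simp only [mem_Icc] at hs
    rw [← Nat.choose_symm (show s - 1 ≤ b by omega)]
    congr 2
    omega

theorem sum_Icc_sum_Icc_half_eq {M : Type*} [AddCommMonoid M] (N : ℕ) (f : ℕ → ℕ → M) :
    ∑ t ∈ Icc 1 N, ∑ s ∈ Icc 1 (t / 2), f s t
      = ∑ m ∈ range N, ∑ s ∈ Icc 1 (min m (N - m)), f s (m + s) := by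
  rw [sum_sigma', sum_sigma']
  refine sum_nbij' (fun p => ⟨p.1 - p.2, p.2⟩) (fun p => ⟨p.1 + p.2, p.2⟩) ?_ ?_ ?_ ?_ ?_ <;>
    rintro ⟨t, s⟩ hp <;>
    simp only [mem_sigma, mem_Icc, mem_range, Sigma.mk.injEq, heq_eq_eq, and_true] at hp ⊢ <;>
    first | omega | rw [Nat.sub_add_cancel (by omega)]

theorem Ptilde_add_right {N s m : ℕ} (hs : 1 ≤ s) (hsm : s ≤ m) (hmN : m + s ≤ N) :
    Ptilde N s (m + s)
      = (2 / 3 : ℝ) ^ (N - 1) * (N - m).choose s * (m - 1).choose (s - 1) * (1 / 2 : ℝ) ^ m := by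
  rw [Ptilde, if_neg (by omega), if_pos (by omega), Nat.add_sub_cancel,
    show N - (m + s) + s = N - m by omega]

theorem sum_Icc_mul_Ptilde_add_right (n m : ℕ) (hm : m < n + 1) :
    ∑ s ∈ Icc 1 (min m (n + 1 - m)),
        (((m + s : ℕ) : ℝ) - s) * (((m + s : ℕ) : ℝ) - s - 1) * Ptilde (n + 1) s (m + s)
      = (2 / 3 : ℝ) ^ n * ((m.descFactorial 2 : ℝ) * n.choose m * (1 / 2 : ℝ) ^ m) := by
  obtain _ | b := m
  · simp
  have hterm : ∀ s ∈ Icc 1 (min (b + 1) (n - b)),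
      (((b + 1 + s : ℕ) : ℝ) - s) * (((b + 1 + s : ℕ) : ℝ) - s - 1) * Ptilde (n + 1) s (b + 1 + s)
        = (2 / 3 : ℝ) ^ n * (((b + 1 : ℕ) : ℝ) * b * (1 / 2 : ℝ) ^ (b + 1))
          * ((n - b).choose s * b.choose (s - 1) : ℕ) := by
    intro s hs
    simp only [mem_Icc] at hs
    rw [Ptilde_add_right hs.1 (by omega) (by omega), show n + 1 - (b + 1) = n - b by omega]
    push_cast
    ring
  rw [show n + 1 - (b + 1) = n - b by omega, sum_congr rfl hterm, ← mul_sum, ← Nat.cast_sum,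
    sum_Icc_choose_mul_choose_sub_one, Nat.sub_add_cancel (by omega), Nat.cast_descFactorial_two]
  push_cast
  ring

/-- the second factorial moment of the total length of dimers
equals `(N-1)(N-2)/9` exactly. -/
theorem second_factorial_moment_total_length (N : ℕ) (hN : 1 ≤ N) :
    ∑ t ∈ Finset.Icc 1 N, ∑ s ∈ Finset.Icc 1 (t / 2),
        (((t : ℝ) - (s : ℝ)) * ((t : ℝ) - (s : ℝ) - 1) * Ptilde N s t)
      = ((N : ℝ) - 1) * ((N : ℝ) - 2) / 9 := by
  obtain ⟨n, rfl⟩ : ∃ n, N = n + 1 := ⟨N - 1, by omega⟩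
  rw [sum_Icc_sum_Icc_half_eq, sum_congr rfl fun m hm =>
    sum_Icc_mul_Ptilde_add_right n m (mem_range.mp hm), ← mul_sum,
    sum_range_descFactorial_mul_choose_mul_pow]
  rcases lt_or_ge n 2 with hn | hn
  · interval_cases n <;> norm_num
  obtain ⟨k, rfl⟩ := Nat.exists_eq_add_of_le' hn
  rw [Nat.cast_descFactorial_two, Nat.add_sub_cancel, pow_add]
  have hinv : (2 / 3 : ℝ) ^ k * (1 / 2 + 1) ^ k = 1 := by
    rw [← mul_pow]; norm_num
  push_cast
  linear_combination ((k + 2 : ℝ) * (k + 1) / 9) * hinv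
end

section
/- The mean number of dimers satisfies the recursive asymptotic relation: lim_{N→∞} [ E_N - ( N/3 - M_N + (2/3)·M_{N-1} ) ] = 0, where E_N := Σ_{t=1}^{N} Σ_{s=1}^{⌊t/2⌋} s · P̃_N(s,t) is the mean number of dimers and M_N := Σ_{t=1}^{N} Σ_{s=1}^{⌊t/2⌋} (t-s) · P̃_N(s,t) is the mean total length of dimers. -/
/-- `E_N`: the mean number of dimers. -/
noncomputable def dimerMean (N : ℕ) : ℝ :=
  ∑ t ∈ Finset.Icc 1 N, ∑ s ∈ Finset.Icc 1 (t / 2), (s : ℝ) * Ptilde N s t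

/-- `M_N`: the mean total length of dimers. -/
noncomputable def lengthMean (N : ℕ) : ℝ :=
  ∑ t ∈ Finset.Icc 1 N, ∑ s ∈ Finset.Icc 1 (t / 2), ((t : ℝ) - (s : ℝ)) * Ptilde N s t

/-!
Both means have closed forms. Writing `s = i + 1` for the number of dimers and `t - s = j + 1`
for their total length, the weight becomes `(2/3)^(N-1) C(N-1-j, i+1) C(j, i) 2^(-(j+1))`.
Vandermonde's identity sums out `i`, and the binomial theorem at `x = 1/2` then sums out `j`:
`M_N = (N - 1)/3` for `N ≥ 1` and `E_N = (2N - 1)/9` for `N ≥ 2`, so the difference in the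
statement vanishes identically for `N ≥ 2`.
-/

open Finset

section BinomialSums

variable {R : Type*} [CommSemiring R]

theorem sum_range_choose_mul_pow (x : R) (n : ℕ) :
    ∑ j ∈ range (n + 1), (n.choose j : R) * x ^ j = (1 + x) ^ n := by
  rw [add_comm 1 x, add_pow]
  simp [mul_comm]

theorem one_add_mul_sum_range_mul_choose_mul_pow (x : R) (n : ℕ) :
    (1 + x) * ∑ j ∈ range (n + 1), (j : R) * n.choose j * x ^ j = n * x * (1 + x) ^ n := by
  cases n with
  | zero => simp
  | succ m =>
    have h : ∀ j : ℕ, ((j + 1 : ℕ) : R) * (m + 1).choose (j + 1) * x ^ (j + 1)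
        = (m + 1) * x * (m.choose j * x ^ j) := by
      intro j
      have key : ((m + 1 : ℕ) : R) * m.choose j = (m + 1).choose (j + 1) * (j + 1 : ℕ) := by
        exact_mod_cast congrArg (Nat.cast (R := R)) (Nat.add_one_mul_choose_eq m j)
      calc ((j + 1 : ℕ) : R) * (m + 1).choose (j + 1) * x ^ (j + 1)
          = (m + 1).choose (j + 1) * (j + 1 : ℕ) * (x * x ^ j) := by ring
        _ = (m + 1) * x * (m.choose j * x ^ j) := by rw [← key]; push_cast; ring
    rw [sum_range_succ', sum_congr rfl fun j _ => h j, ← mul_sum, sum_range_choose_mul_pow]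
    push_cast
    ring

end BinomialSums

namespace Nat

theorem sum_range_choose_mul_choose (m j : ℕ) :
    ∑ i ∈ range (j + 1), m.choose i * j.choose i = (m + j).choose j := by
  rw [add_choose_eq, Nat.sum_antidiagonal_eq_sum_range_succ_mk]
  refine sum_congr rfl fun i hi => ?_
  rw [choose_symm (mem_range_succ_iff.mp hi)]

theorem sum_range_choose_succ_mul_choose (m j : ℕ) :
    ∑ i ∈ range (j + 1), m.choose (i + 1) * j.choose i = (m + j).choose (j + 1) := by
  rw [add_choose_eq, Nat.sum_antidiagonal_succ, Nat.sum_antidiagonal_eq_sum_range_succ_mk]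
  simp only [choose_succ_self, mul_zero, zero_add]
  refine sum_congr rfl fun i hi => ?_
  rw [choose_symm (mem_range_succ_iff.mp hi)]

theorem sum_range_succ_mul_choose_succ_mul_choose (m j : ℕ) :
    ∑ i ∈ range (j + 1), (i + 1) * ((m + 1).choose (i + 1) * j.choose i)
      = (m + 1) * (m + j).choose j := by
  simp_rw [← mul_assoc, mul_comm (_ + 1), ← add_one_mul_choose_eq, mul_assoc, ← mul_sum,
    sum_range_choose_mul_choose, mul_comm]

end Nat

theorem Ptilde_of_lt {N s t : ℕ} (h : N < t) : Ptilde N s t = 0 := by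
  rw [Ptilde, if_neg (by omega), if_neg (by omega)]

theorem Ptilde_succ_add_two (n i j : ℕ) :
    Ptilde (n + 1) (i + 1) (i + j + 2)
      = (2 / 3) ^ n * ((n - j).choose (i + 1) * j.choose i : ℕ) * (1 / 2) ^ (j + 1) := by
  rw [Ptilde, if_neg (by omega)]
  split_ifs with h
  · rw [show n + 1 - (i + j + 2) + (i + 1) = n - j by omega,
      show i + j + 2 - (i + 1) = j + 1 by omega, show j + 1 - 1 = j by omega,
      Nat.add_sub_cancel, Nat.add_sub_cancel]
    push_cast
    ring
  · rcases lt_or_ge j i with hji | hij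
    · simp [Nat.choose_eq_zero_of_lt hji]
    · simp [Nat.choose_eq_zero_of_lt (show n - j < i + 1 by omega)]

theorem sum_mul_Ptilde_succ_reindex (f : ℕ → ℕ → ℝ) (n : ℕ) :
    ∑ t ∈ Icc 1 (n + 1), ∑ s ∈ Icc 1 (t / 2), f s t * Ptilde (n + 1) s t
      = ∑ j ∈ range n, ∑ i ∈ range (j + 1),
          f (i + 1) (i + j + 2) * Ptilde (n + 1) (i + 1) (i + j + 2) := by
  rw [sum_sigma', sum_sigma']
  refine sum_of_injOn (fun p => ⟨p.1 - p.2 - 1, p.2 - 1⟩) ?_ ?_ ?_ ?_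
  · rintro ⟨t, s⟩ hts ⟨t', s'⟩ hts' he
    simp only [coe_sigma, Set.mem_sigma_iff, coe_Icc, Set.mem_Icc, Sigma.mk.injEq,
      heq_eq_eq] at hts hts' he ⊢
    omega
  · rintro ⟨t, s⟩ hts
    simp only [coe_sigma, coe_Icc, Set.mem_sigma_iff, Set.mem_Icc, coe_range, Set.mem_Iio,
      Order.lt_add_one_iff] at hts ⊢
    omega
  · rintro ⟨j, i⟩ hji hne
    simp only [mem_sigma, mem_range, Order.lt_add_one_iff] at hji
    dsimp only
    rw [Ptilde_of_lt, mul_zero]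
    by_contra! h
    refine hne ⟨⟨i + j + 2, i + 1⟩, ?_, ?_⟩
    · simp only [coe_sigma, coe_Icc, Set.mem_sigma_iff, Set.mem_Icc]
      omega
    · simp only [Sigma.mk.injEq, heq_eq_eq]
      omega
  · rintro ⟨t, s⟩ hts
    simp only [mem_sigma, mem_Icc] at hts
    obtain ⟨⟨ht1, htn⟩, hs1, hst⟩ := hts
    dsimp only
    rw [show s - 1 + 1 = s by omega, show s - 1 + (t - s - 1) + 2 = t by omega]

theorem sum_mul_Ptilde_succ (f : ℕ → ℕ → ℝ) (n : ℕ) :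
    ∑ t ∈ Icc 1 (n + 1), ∑ s ∈ Icc 1 (t / 2), f s t * Ptilde (n + 1) s t
      = (2 / 3) ^ n * ∑ j ∈ range n, (1 / 2) ^ (j + 1) * ∑ i ∈ range (j + 1),
          f (i + 1) (i + j + 2) * ((n - j).choose (i + 1) * j.choose i : ℕ) := by
  simp_rw [sum_mul_Ptilde_succ_reindex, Ptilde_succ_add_two, mul_sum]
  exact sum_congr rfl fun j _ => sum_congr rfl fun i _ => by ring

theorem lengthMean_succ (n : ℕ) : lengthMean (n + 1) = n / 3 := by
  have inner : ∀ j ∈ range n, (1 / 2 : ℝ) ^ (j + 1) * ∑ i ∈ range (j + 1),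
      (((i + j + 2 : ℕ) : ℝ) - (i + 1 : ℕ)) * ((n - j).choose (i + 1) * j.choose i : ℕ)
        = (j + 1 : ℕ) * n.choose (j + 1) * (1 / 2 : ℝ) ^ (j + 1) := by
    intro j hj
    have vandermonde := Nat.sum_range_choose_succ_mul_choose (n - j) j
    rw [Nat.sub_add_cancel (mem_range.mp hj).le] at vandermonde
    rw [← vandermonde, Nat.cast_sum, mul_sum, mul_sum, sum_mul]
    exact sum_congr rfl fun i _ => by push_cast; ring
  have hS := one_add_mul_sum_range_mul_choose_mul_pow (1 / 2 : ℝ) n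
  rw [sum_range_succ'] at hS
  have hp : (3 / 2 : ℝ) ^ n * (2 / 3) ^ n = 1 := by rw [← mul_pow]; norm_num
  rw [lengthMean, sum_mul_Ptilde_succ, sum_congr rfl inner]
  linear_combination (2 / 3 : ℝ) ^ (n + 1) * hS + (n / 3 : ℝ) * hp

theorem dimerMean_add_two (n : ℕ) : dimerMean (n + 2) = (2 * n + 3) / 9 := by
  have inner : ∀ j ∈ range (n + 1), (1 / 2 : ℝ) ^ (j + 1) * ∑ i ∈ range (j + 1),
      ((i + 1 : ℕ) : ℝ) * ((n + 1 - j).choose (i + 1) * j.choose i : ℕ)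
        = (1 / 2) * ((n + 1) * (n.choose j * (1 / 2 : ℝ) ^ j)
            - j * n.choose j * (1 / 2) ^ j) := by
    intro j hj
    have hjn : j ≤ n := mem_range_succ_iff.mp hj
    have key : ∑ i ∈ range (j + 1),
        ((i + 1 : ℕ) : ℝ) * ((n + 1 - j).choose (i + 1) * j.choose i : ℕ)
          = ((n + 1 - j) * n.choose j : ℕ) := by
      have := Nat.sum_range_succ_mul_choose_succ_mul_choose (n - j) j
      rw [Nat.sub_add_cancel hjn, ← Nat.sub_add_comm hjn] at this
      exact_mod_cast this
    rw [key, Nat.cast_mul, Nat.cast_sub (by omega)]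
    push_cast
    ring
  have hA := sum_range_choose_mul_pow (1 / 2 : ℝ) n
  have hB := one_add_mul_sum_range_mul_choose_mul_pow (1 / 2 : ℝ) n
  have hp : (3 / 2 : ℝ) ^ n * (2 / 3) ^ n = 1 := by rw [← mul_pow]; norm_num
  rw [dimerMean, sum_mul_Ptilde_succ, sum_congr rfl inner, ← mul_sum, sum_sub_distrib,
    ← mul_sum]
  linear_combination (2 / 3 : ℝ) ^ n * (n + 1) / 3 * hA - (2 / 3 : ℝ) ^ n * (2 / 9) * hB
    + (2 * n + 3) / 9 * hp

/-- recursive asymptotic relation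
`E_N ≍ N/3 - M_N + (2/3)·M_{N-1}` for the mean number of dimers. -/
theorem dimer_mean_recursion :
    Filter.Tendsto
      (fun N : ℕ => dimerMean N - ((N : ℝ) / 3 - lengthMean N + 2 / 3 * lengthMean (N - 1)))
      Filter.atTop (nhds 0) := by
  rw [← Filter.tendsto_add_atTop_iff_nat 2]
  refine tendsto_const_nhds.congr fun n => ?_
  rw [dimerMean_add_two, lengthMean_succ (n + 1), show n + 2 - 1 = n + 1 from rfl, lengthMean_succ]
  push_cast
  ring
end
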